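/- arXiv:2502.08248 — 12 statements merged into one kernel-verified Lean document; each statement's English description precedes it below -/
import Mathlib

section
/- There is no Nash-equilibrium incentive compatible core-selection mechanism for the diamond max-flow game: there exists no function φ : [0,∞)⁴ → ℝ⁴ such that (a) for every capacity vector c, φ(c) ∈ C(N, v_c), and (b) for every c, every player i ∈ {1,2,3,4}, and every t ∈ [0, c_i], φ_i(c) ≥ φ_i(c'), where c' agrees with c in all coordinates except that its i-th coordinate equals t (i.e., truthful reporting is a Nash equilibrium under φ). -/
open Finset

/-- The diamond max-flow game: players `{0,1,2,3}` (edges 1,2,3,4 in the paper: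
edges 0,1 go from the source to an intermediate node, edges 2,3 from there to the sink);
`dv c S` is the max-flow value of coalition `S` when capacities are `c`. -/
noncomputable def dv (c : Fin 4 → ℝ) (S : Finset (Fin 4)) : ℝ :=
  min ((if 0 ∈ S then c 0 else 0) + (if 1 ∈ S then c 1 else 0))
      ((if 2 ∈ S then c 2 else 0) + (if 3 ∈ S then c 3 else 0))

/-- `x` is in the core of the cooperative game `v` on player set `Fin 4`. -/
def inCore (v : Finset (Fin 4) → ℝ) (x : Fin 4 → ℝ) : Prop :=
  (∀ S : Finset (Fin 4), v S ≤ ∑ i ∈ S, x i) ∧ (∑ i, x i = v Finset.univ)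

/-- There is no Nash-equilibrium incentive compatible core-selection mechanism
for the diamond max-flow game. -/
theorem no_NEIC_core_selection :
    ¬ ∃ φ : (Fin 4 → ℝ) → (Fin 4 → ℝ),
      (∀ c : Fin 4 → ℝ, (∀ i, 0 ≤ c i) → inCore (dv c) (φ c)) ∧
      (∀ c : Fin 4 → ℝ, (∀ i, 0 ≤ c i) → ∀ i : Fin 4, ∀ t : ℝ, 0 ≤ t → t ≤ c i →
        φ (Function.update c i t) i ≤ φ c i) := by
  rintro ⟨φ, hcore, hmono⟩
  have hc1nn : ∀ i : Fin 4, (0:ℝ) ≤ (fun _ => (1:ℝ)) i := fun i => by norm_num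
  -- generic facts about the profile with one capacity raised to 2
  have hunn : ∀ i : Fin 4, ∀ j, (0:ℝ) ≤ Function.update (fun _ => (1:ℝ)) i 2 j := by
    intro i j
    simp only [Function.update]
    split <;> norm_num
  have hmon : ∀ i : Fin 4, φ (fun _ => (1:ℝ)) i ≤ φ (Function.update (fun _ => (1:ℝ)) i 2) i := by
    intro i
    have hupd : Function.update (Function.update (fun _ => (1:ℝ)) i 2) i 1
        = (fun _ => (1:ℝ)) := by
      rw [Function.update_idem]
      exact Function.update_eq_self i (fun _ => (1:ℝ))
    have := hmono (Function.update (fun _ => (1:ℝ)) i 2) (hunn i) i 1 (by norm_num)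
      (by simp [Function.update])
    rwa [hupd] at this
  -- player 0's payoff at (2,1,1,1) is ≤ 0
  have key0 : φ (Function.update (fun _ => (1:ℝ)) 0 2) 0 ≤ 0 := by
    obtain ⟨hS, heff⟩ := hcore _ (hunn 0)
    have h1 := hS {1,2}
    have h2 := hS {1,3}
    have h3 := hS {0,2,3}
    rw [Fin.sum_univ_four] at heff
    simp (config := { decide := true }) [dv, Function.update] at h1 h2 h3 heff
    rcases h3 with h3 | h3 <;> linarith
  have key1 : φ (Function.update (fun _ => (1:ℝ)) 1 2) 1 ≤ 0 := by
    obtain ⟨hS, heff⟩ := hcore _ (hunn 1)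
    have h1 := hS {0,2}
    have h2 := hS {0,3}
    have h3 := hS {1,2,3}
    rw [Fin.sum_univ_four] at heff
    simp (config := { decide := true }) [dv, Function.update] at h1 h2 h3 heff
    rcases h3 with h3 | h3 <;> linarith
  have key2 : φ (Function.update (fun _ => (1:ℝ)) 2 2) 2 ≤ 0 := by
    obtain ⟨hS, heff⟩ := hcore _ (hunn 2)
    have h1 := hS {0,3}
    have h2 := hS {1,3}
    have h3 := hS {0,1,2}
    rw [Fin.sum_univ_four] at heff
    simp (config := { decide := true }) [dv, Function.update] at h1 h2 h3 heff
    rcases h3 with h3 | h3 <;> linarith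
  have key3 : φ (Function.update (fun _ => (1:ℝ)) 3 2) 3 ≤ 0 := by
    obtain ⟨hS, heff⟩ := hcore _ (hunn 3)
    have h1 := hS {0,2}
    have h2 := hS {1,2}
    have h3 := hS {0,1,3}
    rw [Fin.sum_univ_four] at heff
    simp (config := { decide := true }) [dv, Function.update] at h1 h2 h3 heff
    rcases h3 with h3 | h3 <;> linarith
  -- but total payoff at (1,1,1,1) is 2
  have heff1 := (hcore (fun _ => (1:ℝ)) hc1nn).2
  rw [Fin.sum_univ_four] at heff1
  simp (config := { decide := true }) [dv] at heff1
  have m0 := hmon 0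
  have m1 := hmon 1
  have m2 := hmon 2
  have m3 := hmon 3
  linarith
end

section
/- For the diamond max-flow game with capacities c = (2,1,1,1), the core C(N, v_c) consists of exactly one allocation, namely (0,0,1,1). In particular, player 1 receives core payoff 0 even though there exists a coalition S with v_c(S) − v_c(S∖{1}) > 0, so any core-selection mechanism violates strong individual rationality. -/
open Finset

/-- For capacities `(2,1,1,1)`, the core of the diamond max-flow game is the
singleton `{(0,0,1,1)}`; in particular player 1 (index 0) gets core payoff 0 even
though she has a strictly positive marginal contribution to some coalition. -/
theorem core_2111_singleton :
    (∀ x : Fin 4 → ℝ, inCore (dv ![2, 1, 1, 1]) x ↔ x = ![0, 0, 1, 1]) ∧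
    (∃ S : Finset (Fin 4),
      0 < dv ![2, 1, 1, 1] S - dv ![2, 1, 1, 1] (S.erase 0)) := by
  constructor
  · intro x
    constructor
    · rintro ⟨h1, h2⟩
      have h023 := h1 {0, 2, 3}
      have h12 := h1 {1, 2}
      have h13 := h1 {1, 3}
      have h1' := h1 {1}
      have h0 := h1 {0}
      simp [dv, Fin.sum_univ_four] at h023 h12 h13 h1' h0 h2
      norm_num at h023 h12 h13
      funext i
      fin_cases i <;> simp <;> linarith
    · rintro rfl
      constructor
      · intro S
        fin_cases S <;> simp [dv]
      · have a2 : (![0, 0, 1, 1] : Fin 4 → ℝ) 2 = 1 := rfl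
        have a3 : (![0, 0, 1, 1] : Fin 4 → ℝ) 3 = 1 := rfl
        have b2 : (![2, 1, 1, 1] : Fin 4 → ℝ) 2 = 1 := rfl
        have b3 : (![2, 1, 1, 1] : Fin 4 → ℝ) 3 = 1 := rfl
        norm_num [dv, Fin.sum_univ_four, a2, a3, b2, b3]
  · exact ⟨{0, 2, 3}, by simp [dv, Finset.erase_insert]⟩
end

section
/- No core-selection mechanism for the diamond max-flow game is cross monotone: there exists no function φ : [0,∞)⁴ → ℝ⁴ such that (a) φ(c) ∈ C(N, v_c) for every capacity vector c, and (b) whenever capacity vectors c and c' agree in all coordinates except that c'_i > c_i for a single player i, and F(c') > F(c), then φ_j(c') ≥ φ_j(c) for every player j ≠ i. -/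
open Finset

/-- No core-selection mechanism for the diamond max-flow game is cross monotone:
there is no mechanism selecting a core allocation for every capacity vector such that
whenever one player's capacity increases and the max-flow value strictly increases,
no other player's payoff decreases. -/
theorem no_CM_core_selection :
    ¬ ∃ φ : (Fin 4 → ℝ) → (Fin 4 → ℝ),
      (∀ c : Fin 4 → ℝ, (∀ i, 0 ≤ c i) → inCore (dv c) (φ c)) ∧
      (∀ c : Fin 4 → ℝ, (∀ i, 0 ≤ c i) → ∀ i : Fin 4, ∀ t : ℝ, c i < t →
        dv c Finset.univ < dv (Function.update c i t) Finset.univ →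
        ∀ j : Fin 4, j ≠ i → φ c j ≤ φ (Function.update c i t) j) := by
  rintro ⟨φ, hcore, hmono⟩
  set ca : Fin 4 → ℝ := ![0,1,1,1] with hca
  set cb : Fin 4 → ℝ := ![1,1,0,1] with hcb
  set cs : Fin 4 → ℝ := ![1,1,1,1] with hcs
  have hca0 : ∀ i, 0 ≤ ca i := by intro i; fin_cases i <;> norm_num [hca]
  have hcb0 : ∀ i, 0 ≤ cb i := by intro i; fin_cases i <;> norm_num [hcb]
  have hcs0 : ∀ i, 0 ≤ cs i := by intro i; fin_cases i <;> norm_num [hcs]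
  have hua : Function.update ca 0 1 = cs := by
    funext i; fin_cases i <;> simp [hca, hcs, Function.update]
  have hub : Function.update cb 2 1 = cs := by
    funext i; fin_cases i <;> simp [hcb, hcs, Function.update]
  have m1 : φ ca 1 ≤ φ cs 1 := by
    have h := hmono ca hca0 0 1 (by norm_num [hca])
      (by rw [hua]; norm_num [dv, hca, hcs] <;> simp) 1 (by decide)
    rwa [hua] at h
  have m3 : φ cb 3 ≤ φ cs 3 := by
    have h := hmono cb hcb0 2 1 (by norm_num [hcb] <;> simp)
      (by rw [hub]; norm_num [dv, hcb, hcs] <;> simp) 3 (by decide)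
    rwa [hub] at h
  obtain ⟨haS, haT⟩ := hcore ca hca0
  obtain ⟨hbS, hbT⟩ := hcore cb hcb0
  obtain ⟨hsS, hsT⟩ := hcore cs hcs0
  rw [Fin.sum_univ_four] at haT hbT hsT
  simp only [dv, hca, hcb, hcs] at haT hbT hsT
  norm_num at haT hbT hsT
  simp at haT hbT hsT
  norm_num at hsT
  -- constraints at ca: x1+x2 ≥ 1, x1+x3 ≥ 1, x0 ≥ 0
  have A12 := haS {1,2}
  have A13 := haS {1,3}
  have A0 := haS {0}
  simp [dv, hca, Finset.sum_pair, show (1:Fin 4) ≠ 2 by decide,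
    show (1:Fin 4) ≠ 3 by decide] at A12 A13 A0
  -- constraints at cb: x0+x3 ≥ 1, x1+x3 ≥ 1, x2 ≥ 0
  have B03 := hbS {0,3}
  have B13 := hbS {1,3}
  have B2 := hbS {2}
  simp [dv, hcb, Finset.sum_pair, show (0:Fin 4) ≠ 3 by decide,
    show (1:Fin 4) ≠ 3 by decide] at B03 B13 B2
  -- constraint at cs: x0+x2 ≥ 1
  have S02 := hsS {0,2}
  simp [dv, hcs, Finset.sum_pair, show (0:Fin 4) ≠ 2 by decide] at S02
  linarith
end

section
/- Let (E,𝓜) be a cut system and i ∈ E. If c, c' ∈ [0,∞)^E satisfy c'(i) ≥ c(i) and c'(e) = c(e) for all e ≠ i, then Sh_i(v_{c'}) ≥ Sh_i(v_c). Consequently, when players can only under-report their capacities, the Shapley value mechanism for max-flow games is dominant strategy incentive compatible. -/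
open Finset

/-- The max-flow game induced by a cut system `𝓜` on edge set `E` with capacities `c`:
by max-flow–min-cut, `flowGame 𝓜 c S = min_{M ∈ 𝓜} c(M ∩ S)`. -/
noncomputable def flowGame {E : Type*} [DecidableEq E]
    (𝓜 : Finset (Finset E)) (c : E → ℝ) (S : Finset E) : ℝ :=
  sInf ((fun M => ∑ e ∈ M ∩ S, c e) '' (𝓜 : Set (Finset E)))

/-- The Shapley value of player `i` in the cooperative game `v` on finite player set `N`. -/
noncomputable def shapley {N : Type*} [Fintype N] [DecidableEq N]
    (v : Finset N → ℝ) (i : N) : ℝ :=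
  ∑ S ∈ Finset.univ.filter (fun S : Finset N => i ∈ S),
    (((S.card - 1).factorial * (Fintype.card N - S.card).factorial : ℕ) : ℝ) /
      ((Fintype.card N).factorial : ℝ) * (v S - v (S.erase i))

lemma flowGame_eq_inf' {E : Type*} [DecidableEq E]
    (𝓜 : Finset (Finset E)) (h𝓜 : 𝓜.Nonempty) (c : E → ℝ) (S : Finset E) :
    flowGame 𝓜 c S = 𝓜.inf' h𝓜 (fun M => ∑ e ∈ M ∩ S, c e) := by
  rw [flowGame, Finset.inf'_eq_csInf_image]

/-- The Shapley value mechanism for max-flow games is DSIC: if player `i` raises her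
reported capacity (capacities of all other players being arbitrary but fixed),
her Shapley payoff does not decrease. -/
theorem shapley_DSIC {E : Type*} [Fintype E] [DecidableEq E]
    (𝓜 : Finset (Finset E)) (h𝓜 : 𝓜.Nonempty) (hMne : ∀ M ∈ 𝓜, M.Nonempty)
    (i : E) (c c' : E → ℝ) (hc : ∀ e, 0 ≤ c e) (hc' : ∀ e, 0 ≤ c' e)
    (hi : c i ≤ c' i) (hoff : ∀ e, e ≠ i → c' e = c e) :
    shapley (flowGame 𝓜 c) i ≤ shapley (flowGame 𝓜 c') i := by
  have hle : ∀ e, c e ≤ c' e := by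
    intro e
    by_cases h : e = i
    · subst h; exact hi
    · rw [hoff e h]
  unfold shapley
  apply Finset.sum_le_sum
  intro S hS
  have hw : (0:ℝ) ≤ (((S.card - 1).factorial * (Fintype.card E - S.card).factorial : ℕ) : ℝ) /
      ((Fintype.card E).factorial : ℝ) := by positivity
  apply mul_le_mul_of_nonneg_left _ hw
  have h1 : flowGame 𝓜 c S ≤ flowGame 𝓜 c' S := by
    rw [flowGame_eq_inf' 𝓜 h𝓜, flowGame_eq_inf' 𝓜 h𝓜]
    apply Finset.le_inf'
    intro M hM
    refine le_trans (Finset.inf'_le _ hM) ?_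
    exact Finset.sum_le_sum fun e _ => hle e
  have h2 : flowGame 𝓜 c' (S.erase i) = flowGame 𝓜 c (S.erase i) := by
    rw [flowGame_eq_inf' 𝓜 h𝓜, flowGame_eq_inf' 𝓜 h𝓜]
    apply Finset.inf'_congr _ rfl
    intro M hM
    apply Finset.sum_congr rfl
    intro e he
    exact hoff e (fun h => (Finset.mem_erase.1 (Finset.mem_inter.1 he).2).1 h)
  rw [h2]
  linarith
end

section
/- Let v be the cooperative game on N = {0,1,2,3,4,5} defined by v(S) = min(1[0∈S], 2·1[1∈S] + |S ∩ {2,3,4,5}|), and let v' be the cooperative game on N' = {0, 1a, 1b, 2, 3, 4, 5} defined by v'(S) = min(1[0∈S], 1[1a∈S] + 1[1b∈S] + |S ∩ {2,3,4,5}|). Then Sh_1(v) = 1/30, Sh_{1a}(v') = Sh_{1b}(v') = 1/42, and Sh_{1a}(v') + Sh_{1b}(v') > Sh_1(v). Hence the Shapley value mechanism violates split-proofness: the owner of the capacity-2 edge strictly gains by splitting it into two parallel capacity-1 edges. -/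
open Finset

/-- Max-flow game of the network with one edge `0` of capacity 1 from source to node `A`
and five parallel edges `1,…,5` from `A` to the sink of capacities `2,1,1,1,1`. -/
noncomputable def vSplit (S : Finset (Fin 6)) : ℝ :=
  min (if 0 ∈ S then 1 else 0)
    ((if 1 ∈ S then 2 else 0) + ((S ∩ ({2, 3, 4, 5} : Finset (Fin 6))).card : ℝ))

/-- The same network after edge `1` is split into two parallel unit-capacity edges:
players `1` and `2` are the two halves, players `3,4,5,6` are the old edges `2,3,4,5`. -/
noncomputable def vSplit' (S : Finset (Fin 7)) : ℝ :=
  min (if 0 ∈ S then 1 else 0)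
    ((if 1 ∈ S then 1 else 0) + (if 2 ∈ S then 1 else 0) +
      ((S ∩ ({3, 4, 5, 6} : Finset (Fin 7))).card : ℝ))


def iv (S : Finset (Fin 6)) : ℤ :=
  min (if 0 ∈ S then 1 else 0)
    ((if 1 ∈ S then 2 else 0) + ((S ∩ ({2, 3, 4, 5} : Finset (Fin 6))).card : ℤ))

def iv' (S : Finset (Fin 7)) : ℤ :=
  min (if 0 ∈ S then 1 else 0)
    ((if 1 ∈ S then 1 else 0) + (if 2 ∈ S then 1 else 0) +
      ((S ∩ ({3, 4, 5, 6} : Finset (Fin 7))).card : ℤ))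

lemma cast_iv (S : Finset (Fin 6)) : ((iv S : ℤ) : ℝ) = vSplit S := by
  simp [iv, vSplit, Int.cast_min, apply_ite (fun z : ℤ => (z : ℝ))]

lemma cast_iv' (S : Finset (Fin 7)) : ((iv' S : ℤ) : ℝ) = vSplit' S := by
  simp [iv', vSplit', Int.cast_min, apply_ite (fun z : ℤ => (z : ℝ))]

lemma shapley6 (i : Fin 6) :
    shapley vSplit i = ((∑ S ∈ Finset.univ.filter (fun S : Finset (Fin 6) => i ∈ S),
      (((S.card - 1).factorial * (6 - S.card).factorial : ℕ) : ℤ) *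
        (iv S - iv (S.erase i)) : ℤ) : ℝ) / 720 := by
  rw [shapley, Int.cast_sum, Finset.sum_div]
  refine Finset.sum_congr rfl fun S hS => ?_
  have h6 : Fintype.card (Fin 6) = 6 := by simp
  rw [h6]
  push_cast [cast_iv]
  rw [show ((Nat.factorial 6 : ℕ) : ℝ) = 720 by norm_num [Nat.factorial]]
  ring

lemma shapley7 (i : Fin 7) :
    shapley vSplit' i = ((∑ S ∈ Finset.univ.filter (fun S : Finset (Fin 7) => i ∈ S),
      (((S.card - 1).factorial * (7 - S.card).factorial : ℕ) : ℤ) *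
        (iv' S - iv' (S.erase i)) : ℤ) : ℝ) / 5040 := by
  rw [shapley, Int.cast_sum, Finset.sum_div]
  refine Finset.sum_congr rfl fun S hS => ?_
  have h7 : Fintype.card (Fin 7) = 7 := by simp
  rw [h7]
  push_cast [cast_iv']
  rw [show ((Nat.factorial 7 : ℕ) : ℝ) = 5040 by norm_num [Nat.factorial]]
  ring

/-- The Shapley value mechanism violates split-proofness: the owner of the capacity-2
edge gets `1/30` before the split and `1/42 + 1/42 > 1/30` after splitting it into two
parallel unit-capacity edges. -/
theorem shapley_not_split_proof :
    shapley vSplit 1 = 1 / 30 ∧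
    shapley vSplit' 1 = 1 / 42 ∧
    shapley vSplit' 2 = 1 / 42 ∧
    shapley vSplit 1 < shapley vSplit' 1 + shapley vSplit' 2 := by
  have h1 : (∑ S ∈ Finset.univ.filter (fun S : Finset (Fin 6) => 1 ∈ S),
      (((S.card - 1).factorial * (6 - S.card).factorial : ℕ) : ℤ) *
        (iv S - iv (S.erase 1)) : ℤ) = 24 := by decide
  have h2 : (∑ S ∈ Finset.univ.filter (fun S : Finset (Fin 7) => 1 ∈ S),
      (((S.card - 1).factorial * (7 - S.card).factorial : ℕ) : ℤ) *
        (iv' S - iv' (S.erase 1)) : ℤ) = 120 := by decide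
  have h3 : (∑ S ∈ Finset.univ.filter (fun S : Finset (Fin 7) => 2 ∈ S),
      (((S.card - 1).factorial * (7 - S.card).factorial : ℕ) : ℤ) *
        (iv' S - iv' (S.erase 2)) : ℤ) = 120 := by decide
  rw [shapley6, shapley7, shapley7, h1, h2, h3]
  norm_num
end

section
/- Let (E,𝓜) be a cut system and i ∈ E. If c, c' are positive capacity vectors on E with c'(i) ≥ c(i) and c'(e) = c(e) for all e ≠ i, then MC_i(c') ≥ MC_i(c). Consequently, when players can only under-report their capacities, the MC mechanism is dominant strategy incentive compatible. -/
open Finset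

/-- The max-flow value of a cut system `𝓜` with capacities `c`:
by max-flow–min-cut, `flowF 𝓜 c = min_{M ∈ 𝓜} c(M)`. -/
noncomputable def flowF {E : Type*} [DecidableEq E]
    (𝓜 : Finset (Finset E)) (c : E → ℝ) : ℝ :=
  sInf ((fun M => ∑ e ∈ M, c e) '' (𝓜 : Set (Finset E)))

/-- The MC mechanism: player `i` receives
`(F(c)/|𝓜|) · Σ_{M ∈ 𝓜, i ∈ M} c(i)/c(M)`. -/
noncomputable def MC {E : Type*} [DecidableEq E]
    (𝓜 : Finset (Finset E)) (c : E → ℝ) (i : E) : ℝ :=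
  flowF 𝓜 c / (𝓜.card : ℝ) *
    ∑ M ∈ 𝓜.filter (fun M => i ∈ M), c i / ∑ e ∈ M, c e

/-- The MC mechanism is DSIC: if player `i` raises her reported capacity
(capacities of all other players being arbitrary but fixed), her MC payoff does
not decrease. -/
theorem MC_DSIC {E : Type*} [DecidableEq E]
    (𝓜 : Finset (Finset E)) (h𝓜 : 𝓜.Nonempty) (hMne : ∀ M ∈ 𝓜, M.Nonempty)
    (i : E) (c c' : E → ℝ) (hc : ∀ e, 0 < c e) (hc' : ∀ e, 0 < c' e)
    (hi : c i ≤ c' i) (hoff : ∀ e, e ≠ i → c' e = c e) :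
    MC 𝓜 c i ≤ MC 𝓜 c' i := by
  have hδ : ∀ M ∈ 𝓜, (0:ℝ) < ∑ e ∈ M, c e := fun M hM =>
    Finset.sum_pos (fun e _ => hc e) (hMne M hM)
  have hδ' : ∀ M ∈ 𝓜, (0:ℝ) < ∑ e ∈ M, c' e := fun M hM =>
    Finset.sum_pos (fun e _ => hc' e) (hMne M hM)
  have hle : ∀ e, c e ≤ c' e := fun e => by
    by_cases h : e = i
    · subst h; exact hi
    · rw [hoff e h]
  have hbdd : BddBelow ((fun M => ∑ e ∈ M, c e) '' (𝓜 : Set (Finset E))) :=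
    (Set.Finite.image _ 𝓜.finite_toSet).bddBelow
  have hne : ((fun M => ∑ e ∈ M, c e) '' (𝓜 : Set (Finset E))).Nonempty :=
    ⟨_, h𝓜.choose, h𝓜.choose_spec, rfl⟩
  have hne' : ((fun M => ∑ e ∈ M, c' e) '' (𝓜 : Set (Finset E))).Nonempty :=
    ⟨_, h𝓜.choose, h𝓜.choose_spec, rfl⟩
  have hF0 : 0 ≤ flowF 𝓜 c := by
    apply le_csInf hne
    rintro x ⟨M, hM, rfl⟩
    exact (hδ M hM).le
  have hFmono : flowF 𝓜 c ≤ flowF 𝓜 c' := by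
    apply le_csInf hne'
    rintro x ⟨M, hM, rfl⟩
    exact le_trans (csInf_le hbdd ⟨M, hM, rfl⟩) (Finset.sum_le_sum fun e _ => hle e)
  have hsum0 : 0 ≤ ∑ M ∈ 𝓜.filter (fun M => i ∈ M), c i / ∑ e ∈ M, c e := by
    apply Finset.sum_nonneg
    intro M hM
    simp only [Finset.mem_filter] at hM
    exact div_nonneg (hc i).le (hδ M hM.1).le
  have hsum : ∑ M ∈ 𝓜.filter (fun M => i ∈ M), c i / ∑ e ∈ M, c e
      ≤ ∑ M ∈ 𝓜.filter (fun M => i ∈ M), c' i / ∑ e ∈ M, c' e := by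
    apply Finset.sum_le_sum
    intro M hM
    simp only [Finset.mem_filter] at hM
    obtain ⟨hM𝓜, hiM⟩ := hM
    rw [div_le_div_iff₀ (hδ M hM𝓜) (hδ' M hM𝓜)]
    have hsplit : ∑ e ∈ M, c' e = c' i + ∑ e ∈ M.erase i, c e := by
      rw [← Finset.add_sum_erase _ _ hiM]
      congr 1
      exact Finset.sum_congr rfl fun e he => hoff e (Finset.ne_of_mem_erase he)
    have hsplit2 : ∑ e ∈ M, c e = c i + ∑ e ∈ M.erase i, c e :=
      (Finset.add_sum_erase _ _ hiM).symm
    have hS : (0:ℝ) ≤ ∑ e ∈ M.erase i, c e :=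
      Finset.sum_nonneg fun e _ => (hc e).le
    rw [hsplit, hsplit2]
    nlinarith [hc i, hc' i]
  unfold MC
  have hn : (0:ℝ) < 𝓜.card := by exact_mod_cast Finset.card_pos.mpr h𝓜
  apply mul_le_mul _ hsum hsum0 (div_nonneg (hF0.trans hFmono) hn.le)
  exact div_le_div_of_nonneg_right hFmono hn.le
end

section
/- Let (E,𝓜) be a cut system such that every edge of E lies in at least one member of 𝓜 and, for every edge of E, some member of 𝓜 does not contain it. Then for every positive capacity vector c and every i ∈ E, MC_i(c) > 0 and v_c({i}) = 0; in particular MC_i(c) > v_c({i}) for all i, so the MC mechanism is strongly individually rational. -/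
open Finset

/-- The MC mechanism is strongly individually rational: if every edge lies in some
minimal cut and every edge is missed by some minimal cut (no source-to-sink edges),
then every player's MC payoff is strictly positive while her stand-alone value is 0. -/
theorem MC_SIR {E : Type*} [DecidableEq E]
    (𝓜 : Finset (Finset E)) (h𝓜 : 𝓜.Nonempty) (hMne : ∀ M ∈ 𝓜, M.Nonempty)
    (hcover : ∀ e : E, ∃ M ∈ 𝓜, e ∈ M) (hmiss : ∀ e : E, ∃ M ∈ 𝓜, e ∉ M)
    (c : E → ℝ) (hc : ∀ e, 0 < c e) (i : E) :
    0 < MC 𝓜 c i ∧ flowGame 𝓜 c {i} = 0 ∧ flowGame 𝓜 c {i} < MC 𝓜 c i := by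
  have hMC : 0 < MC 𝓜 c i := by
    have hset : ((fun M => ∑ e ∈ M, c e) '' (𝓜 : Set (Finset E))).Nonempty :=
      ⟨_, Set.mem_image_of_mem _ (by exact_mod_cast h𝓜.choose_spec : (h𝓜.choose : Finset E) ∈ (𝓜 : Set (Finset E)))⟩
    have hfin : ((fun M => ∑ e ∈ M, c e) '' (𝓜 : Set (Finset E))).Finite :=
      (𝓜.finite_toSet).image _
    have hmem := hset.csInf_mem hfin
    obtain ⟨M, hM, hMeq⟩ := hmem
    have hMpos : 0 < ∑ e ∈ M, c e :=
      Finset.sum_pos (fun e _ => hc e) (hMne M hM)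
    have hF : 0 < flowF 𝓜 c := by
      unfold flowF; rw [← hMeq]; exact hMpos
    have hcard : 0 < (𝓜.card : ℝ) := by exact_mod_cast Finset.card_pos.mpr h𝓜
    have hsum : 0 < ∑ M ∈ 𝓜.filter (fun M => i ∈ M), c i / ∑ e ∈ M, c e := by
      apply Finset.sum_pos
      · intro M hM'
        rw [Finset.mem_filter] at hM'
        exact div_pos (hc i) (Finset.sum_pos (fun e _ => hc e) (hMne M hM'.1))
      · obtain ⟨M, hM, hiM⟩ := hcover i
        exact ⟨M, Finset.mem_filter.mpr ⟨hM, hiM⟩⟩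
    exact mul_pos (div_pos hF hcard) hsum
  have hgame : flowGame 𝓜 c {i} = 0 := by
    obtain ⟨M, hM, hiM⟩ := hmiss i
    have hMi : M ∩ {i} = ∅ := by
      ext e; simp only [Finset.mem_inter, Finset.mem_singleton, Finset.notMem_empty,
        iff_false]
      rintro ⟨he, rfl⟩; exact hiM he
    have h0mem : (0 : ℝ) ∈ (fun M => ∑ e ∈ M ∩ {i}, c e) '' (𝓜 : Set (Finset E)) := by
      refine ⟨M, hM, ?_⟩
      simp [hMi]
    have hbdd : BddBelow ((fun M => ∑ e ∈ M ∩ {i}, c e) '' (𝓜 : Set (Finset E))) :=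
      ((𝓜.finite_toSet).image _).bddBelow
    have hlb : ∀ x ∈ (fun M => ∑ e ∈ M ∩ {i}, c e) '' (𝓜 : Set (Finset E)), (0:ℝ) ≤ x := by
      rintro x ⟨N, _, rfl⟩
      exact Finset.sum_nonneg fun e _ => (hc e).le
    exact le_antisymm (csInf_le hbdd h0mem) (le_csInf ⟨0, h0mem⟩ hlb)
  exact ⟨hMC, hgame, by rw [hgame]; exact hMC⟩
end

section
/- Suppose the pair (e₁,e₂) is independent, i.e., no member of 𝓜 contains both e₁ and e₂, and suppose e₂ belongs to at least one member of 𝓜. Then the function t ↦ MC_{e₂}(c_t) is strictly increasing on (0, x*(e₁)] (that is, MC_{e₂}(c_t) < MC_{e₂}(c_{t'}) whenever 0 < t < t' ≤ x*(e₁)) and constant for t beyond the critical value (that is, MC_{e₂}(c_t) = MC_{e₂}(c_{t'}) whenever t, t' > 0 and x*(e₁) ≤ t < t'). -/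
open Finset

/-- If `(e₁, e₂)` is an independent pair (no minimal cut contains both) and `e₂` lies in
some minimal cut, then `e₂`'s MC payoff is strictly increasing in `e₁`'s capacity on
`(0, x*(e₁)]` and constant beyond the critical value `x*(e₁) = A - min A B`. -/
theorem MC_independent_pair {E : Type*} [DecidableEq E]
    (𝓜 : Finset (Finset E)) (h𝓜 : 𝓜.Nonempty) (hMne : ∀ M ∈ 𝓜, M.Nonempty)
    (e₁ e₂ : E) (hne : e₁ ≠ e₂)
    (h1in : ∃ M ∈ 𝓜, e₁ ∈ M) (h1out : ∃ M ∈ 𝓜, e₁ ∉ M)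
    (c : E → ℝ) (hc : ∀ e, e ≠ e₁ → 0 < c e)
    (A B xstar : ℝ)
    (hA : A = sInf ((fun M => ∑ e ∈ M, c e) '' {M | M ∈ 𝓜 ∧ e₁ ∉ M}))
    (hB : B = sInf ((fun M => ∑ e ∈ M.erase e₁, c e) '' {M | M ∈ 𝓜 ∧ e₁ ∈ M}))
    (hx : xstar = A - min A B)
    (hindep : ∀ M ∈ 𝓜, ¬(e₁ ∈ M ∧ e₂ ∈ M))
    (h2in : ∃ M ∈ 𝓜, e₂ ∈ M) :
    (∀ t t' : ℝ, 0 < t → t < t' → t' ≤ xstar →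
      MC 𝓜 (Function.update c e₁ t) e₂ < MC 𝓜 (Function.update c e₁ t') e₂) ∧
    (∀ t t' : ℝ, 0 < t → xstar ≤ t → t < t' →
      MC 𝓜 (Function.update c e₁ t) e₂ = MC 𝓜 (Function.update c e₁ t') e₂) := by
  classical
  -- abbreviations
  set SA : Set ℝ := ((fun M => ∑ e ∈ M, c e) '' {M | M ∈ 𝓜 ∧ e₁ ∉ M}) with hSA
  set SB : Set ℝ := ((fun M => ∑ e ∈ M.erase e₁, c e) '' {M | M ∈ 𝓜 ∧ e₁ ∈ M}) with hSB
  have hSAfin : SA.Finite := (𝓜.finite_toSet.subset (fun M hM => hM.1)).image _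
  have hSBfin : SB.Finite := (𝓜.finite_toSet.subset (fun M hM => hM.1)).image _
  have hSAne : SA.Nonempty := by
    obtain ⟨M, hM, hM1⟩ := h1out
    exact ⟨_, ⟨M, ⟨hM, hM1⟩, rfl⟩⟩
  have hSBne : SB.Nonempty := by
    obtain ⟨M, hM, hM1⟩ := h1in
    exact ⟨_, ⟨M, ⟨hM, hM1⟩, rfl⟩⟩
  have hAmem : A ∈ SA := hA ▸ hSAne.csInf_mem hSAfin
  have hBmem : B ∈ SB := hB ▸ hSBne.csInf_mem hSBfin
  have hupd_notmem : ∀ (t : ℝ) (M : Finset E), e₁ ∉ M →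
      ∑ e ∈ M, Function.update c e₁ t e = ∑ e ∈ M, c e := by
    intro t M hM
    exact Finset.sum_congr rfl fun e he => Function.update_of_ne (ne_of_mem_of_not_mem he hM) _ _
  have hupd_mem : ∀ (t : ℝ) (M : Finset E), e₁ ∈ M →
      ∑ e ∈ M, Function.update c e₁ t e = t + ∑ e ∈ M.erase e₁, c e := by
    intro t M hM
    rw [← Finset.add_sum_erase _ _ hM, Function.update_self]
    congr 1
    exact Finset.sum_congr rfl fun e he =>
      Function.update_of_ne (Finset.ne_of_mem_erase he) _ _
  -- flow computation
  have hflow : ∀ t : ℝ, flowF 𝓜 (Function.update c e₁ t) = min A (t + B) := by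
    intro t
    set f : Finset E → ℝ := fun M => ∑ e ∈ M, Function.update c e₁ t e with hf
    have hfin : (f '' (𝓜 : Set (Finset E))).Finite := 𝓜.finite_toSet.image f
    have hne' : (f '' (𝓜 : Set (Finset E))).Nonempty :=
      (Finset.coe_nonempty.2 h𝓜).image f
    have le1 : flowF 𝓜 (Function.update c e₁ t) ≤ A := by
      obtain ⟨M₀, hM₀, hv⟩ := hAmem
      have : f M₀ = A := by
        show ∑ e ∈ M₀, Function.update c e₁ t e = A
        rw [hupd_notmem t M₀ hM₀.2]; exact hv
      calc flowF 𝓜 (Function.update c e₁ t) ≤ f M₀ :=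
            csInf_le hfin.bddBelow ⟨M₀, hM₀.1, rfl⟩
        _ = A := this
    have le2 : flowF 𝓜 (Function.update c e₁ t) ≤ t + B := by
      obtain ⟨M₁, hM₁, hv⟩ := hBmem
      have : f M₁ = t + B := by
        show ∑ e ∈ M₁, Function.update c e₁ t e = t + B
        rw [hupd_mem t M₁ hM₁.2]
        exact congrArg (t + ·) hv
      calc flowF 𝓜 (Function.update c e₁ t) ≤ f M₁ :=
            csInf_le hfin.bddBelow ⟨M₁, hM₁.1, rfl⟩
        _ = t + B := this
    have ge : min A (t + B) ≤ flowF 𝓜 (Function.update c e₁ t) := by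
      have hmem : flowF 𝓜 (Function.update c e₁ t) ∈ f '' (𝓜 : Set (Finset E)) :=
        hne'.csInf_mem hfin
      obtain ⟨M, hM, hv⟩ := hmem
      by_cases h1 : e₁ ∈ M
      · have hBle : B ≤ ∑ e ∈ M.erase e₁, c e := by
          rw [hB]
          exact csInf_le hSBfin.bddBelow ⟨M, ⟨hM, h1⟩, rfl⟩
        have : f M = t + ∑ e ∈ M.erase e₁, c e := hupd_mem t M h1
        calc min A (t + B) ≤ t + B := min_le_right _ _
          _ ≤ t + ∑ e ∈ M.erase e₁, c e := by linarith
          _ = f M := this.symm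
          _ = _ := hv
      · have hAle : A ≤ ∑ e ∈ M, c e := by
          rw [hA]
          exact csInf_le hSAfin.bddBelow ⟨M, ⟨hM, h1⟩, rfl⟩
        have : f M = ∑ e ∈ M, c e := hupd_notmem t M h1
        calc min A (t + B) ≤ A := min_le_left _ _
          _ ≤ ∑ e ∈ M, c e := hAle
          _ = f M := this.symm
          _ = _ := hv
    exact le_antisymm (le_min le1 le2) ge
  -- the sum factor is constant in t
  set S : ℝ := ∑ M ∈ 𝓜.filter (fun M => e₂ ∈ M), c e₂ / ∑ e ∈ M, c e with hS
  have hMC : ∀ t : ℝ, MC 𝓜 (Function.update c e₁ t) e₂ = min A (t + B) / 𝓜.card * S := by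
    intro t
    unfold MC
    rw [hflow t]
    congr 1
    apply Finset.sum_congr rfl
    intro M hM
    simp only [Finset.mem_filter] at hM
    have he1 : e₁ ∉ M := fun h => hindep M hM.1 ⟨h, hM.2⟩
    rw [hupd_notmem t M he1, Function.update_of_ne hne.symm]
  have hcard : (0 : ℝ) < 𝓜.card := by exact_mod_cast h𝓜.card_pos
  have hSpos : 0 < S := by
    rw [hS]
    obtain ⟨M₂, hM₂, hM₂e⟩ := h2in
    apply Finset.sum_pos
    · intro M hM
      simp only [Finset.mem_filter] at hM
      have he1 : e₁ ∉ M := fun h => hindep M hM.1 ⟨h, hM.2⟩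
      refine div_pos (hc e₂ hne.symm) ?_
      exact Finset.sum_pos (fun e he => hc e (ne_of_mem_of_not_mem he he1)) (hMne M hM.1)
    · exact ⟨M₂, Finset.mem_filter.2 ⟨hM₂, hM₂e⟩⟩
  constructor
  · intro t t' ht htt' ht'
    rw [hMC t, hMC t']
    rcases le_total A B with hAB | hBA
    · exfalso
      have : xstar = 0 := by rw [hx, min_eq_left hAB]; ring
      linarith
    · have hx' : xstar = A - B := by rw [hx, min_eq_right hBA]
      have h2 : t' + B ≤ A := by rw [hx'] at ht'; linarith
      have h1 : t + B ≤ A := by linarith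
      rw [min_eq_right h1, min_eq_right h2]
      have hdiv : (t + B) / (𝓜.card : ℝ) < (t' + B) / (𝓜.card : ℝ) := by
        rw [div_lt_div_iff₀ hcard hcard]
        exact mul_lt_mul_of_pos_right (by linarith) hcard
      exact mul_lt_mul_of_pos_right hdiv hSpos
  · intro t t' ht hxt htt'
    rw [hMC t, hMC t']
    have hm : min A B ≤ B := min_le_right A B
    have h1 : A ≤ t + B := by rw [hx] at hxt; linarith
    have h2 : A ≤ t' + B := by linarith
    rw [min_eq_left h1, min_eq_left h2]
end

section
/- Suppose the ordered pair (e₁,e₂) is inclusive, i.e., every M ∈ 𝓜 with e₂ ∈ M satisfies e₁ ∈ M and Σ_{e∈M∖{e₁}} c(e) = min_{M'∈𝓜} Σ_{e∈M'∖{e₁}} c(e), and suppose e₂ belongs to at least one member of 𝓜. Then the function t ↦ MC_{e₂}(c_t) is constant on (0, x*(e₁)] (that is, MC_{e₂}(c_t) = MC_{e₂}(c_{t'}) whenever 0 < t < t' ≤ x*(e₁)) and strictly decreasing beyond the critical value (that is, MC_{e₂}(c_t) > MC_{e₂}(c_{t'}) whenever t, t' > 0 and x*(e₁) ≤ t < t').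 -/
open Finset

/-- If the ordered pair `(e₁, e₂)` is inclusive (every minimal cut containing `e₂` also
contains `e₁` and becomes a minimum cut of `G ∖ {e₁}` after removing `e₁`) and `e₂` lies
in some minimal cut, then `e₂`'s MC payoff is constant in `e₁`'s capacity on `(0, x*(e₁)]`
and strictly decreasing beyond the critical value `x*(e₁) = A - min A B`. -/
theorem MC_inclusive_pair {E : Type*} [DecidableEq E]
    (𝓜 : Finset (Finset E)) (h𝓜 : 𝓜.Nonempty) (hMne : ∀ M ∈ 𝓜, M.Nonempty)
    (e₁ e₂ : E) (hne : e₁ ≠ e₂)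
    (h1in : ∃ M ∈ 𝓜, e₁ ∈ M) (h1out : ∃ M ∈ 𝓜, e₁ ∉ M)
    (c : E → ℝ) (hc : ∀ e, e ≠ e₁ → 0 < c e)
    (A B xstar : ℝ)
    (hA : A = sInf ((fun M => ∑ e ∈ M, c e) '' {M | M ∈ 𝓜 ∧ e₁ ∉ M}))
    (hB : B = sInf ((fun M => ∑ e ∈ M.erase e₁, c e) '' {M | M ∈ 𝓜 ∧ e₁ ∈ M}))
    (hx : xstar = A - min A B)
    (hincl : ∀ M ∈ 𝓜, e₂ ∈ M → e₁ ∈ M ∧ ∑ e ∈ M.erase e₁, c e = B)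
    (h2in : ∃ M ∈ 𝓜, e₂ ∈ M) :
    (∀ t t' : ℝ, 0 < t → t < t' → t' ≤ xstar →
      MC 𝓜 (Function.update c e₁ t) e₂ = MC 𝓜 (Function.update c e₁ t') e₂) ∧
    (∀ t t' : ℝ, 0 < t → xstar ≤ t → t < t' →
      MC 𝓜 (Function.update c e₁ t') e₂ < MC 𝓜 (Function.update c e₁ t) e₂) := by

  classical
  have hc2 : 0 < c e₂ := hc e₂ (Ne.symm hne)
  -- A is attained
  have hS0fin : ((fun M => ∑ e ∈ M, c e) '' {M | M ∈ 𝓜 ∧ e₁ ∉ M}).Finite := by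
    apply Set.Finite.image
    exact (𝓜 : Set (Finset E)).toFinite.subset (fun M hM => hM.1)
  have hS0ne : ((fun M => ∑ e ∈ M, c e) '' {M | M ∈ 𝓜 ∧ e₁ ∉ M}).Nonempty := by
    obtain ⟨M, hM, h1⟩ := h1out
    exact ⟨_, ⟨M, ⟨hM, h1⟩, rfl⟩⟩
  obtain ⟨M₀, ⟨hM₀, h1M₀⟩, hAval⟩ : ∃ M, (M ∈ 𝓜 ∧ e₁ ∉ M) ∧ ∑ e ∈ M, c e = A := by
    have := hS0ne.csInf_mem hS0fin
    rw [← hA] at this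
    obtain ⟨M, hM, hMeq⟩ := this
    exact ⟨M, hM, hMeq⟩
  have hAle : ∀ M ∈ 𝓜, e₁ ∉ M → A ≤ ∑ e ∈ M, c e := by
    intro M hM h1
    rw [hA]
    exact csInf_le hS0fin.bddBelow ⟨M, ⟨hM, h1⟩, rfl⟩
  -- B is attained
  have hS1fin : ((fun M => ∑ e ∈ M.erase e₁, c e) '' {M | M ∈ 𝓜 ∧ e₁ ∈ M}).Finite := by
    apply Set.Finite.image
    exact (𝓜 : Set (Finset E)).toFinite.subset (fun M hM => hM.1)
  have hS1ne : ((fun M => ∑ e ∈ M.erase e₁, c e) '' {M | M ∈ 𝓜 ∧ e₁ ∈ M}).Nonempty := by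
    obtain ⟨M, hM, h1⟩ := h1in
    exact ⟨_, ⟨M, ⟨hM, h1⟩, rfl⟩⟩
  have hBle : ∀ M ∈ 𝓜, e₁ ∈ M → B ≤ ∑ e ∈ M.erase e₁, c e := by
    intro M hM h1
    rw [hB]
    exact csInf_le hS1fin.bddBelow ⟨M, ⟨hM, h1⟩, rfl⟩
  obtain ⟨M₁, ⟨hM₁, h1M₁⟩, hBval⟩ : ∃ M, (M ∈ 𝓜 ∧ e₁ ∈ M) ∧ ∑ e ∈ M.erase e₁, c e = B := by
    have := hS1ne.csInf_mem hS1fin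
    rw [← hB] at this
    obtain ⟨M, hM, hMeq⟩ := this
    exact ⟨M, hM, hMeq⟩
  -- positivity
  have hApos : 0 < A := by
    rw [← hAval]
    apply Finset.sum_pos
    · intro e he
      refine hc e ?_
      rintro rfl
      exact h1M₀ he
    · exact hMne M₀ hM₀
  have hBnn : 0 ≤ B := by
    rw [← hBval]
    apply Finset.sum_nonneg
    intro e he
    exact le_of_lt (hc e (Finset.ne_of_mem_erase he))
  -- sums under update
  have hsum1 : ∀ (t : ℝ), ∀ M : Finset E, e₁ ∈ M →
      ∑ e ∈ M, Function.update c e₁ t e = t + ∑ e ∈ M.erase e₁, c e := by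
    intro t M h1
    rw [← Finset.add_sum_erase _ _ h1, Function.update_self]
    congr 1
    exact Finset.sum_congr rfl (fun e he =>
      Function.update_of_ne (Finset.ne_of_mem_erase he) _ _)
  have hsum0 : ∀ (t : ℝ), ∀ M : Finset E, e₁ ∉ M →
      ∑ e ∈ M, Function.update c e₁ t e = ∑ e ∈ M, c e := by
    intro t M h1
    refine Finset.sum_congr rfl (fun e he => Function.update_of_ne ?_ _ _)
    rintro rfl
    exact h1 he
  -- flow formula
  have hflow : ∀ t : ℝ, flowF 𝓜 (Function.update c e₁ t) = min A (t + B) := by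
    intro t
    have hfin : ((fun M => ∑ e ∈ M, Function.update c e₁ t e) '' (𝓜 : Set (Finset E))).Finite :=
      Set.Finite.image _ (𝓜 : Set (Finset E)).toFinite
    have hne' : ((fun M => ∑ e ∈ M, Function.update c e₁ t e) '' (𝓜 : Set (Finset E))).Nonempty :=
      ⟨_, ⟨h𝓜.choose, h𝓜.choose_spec, rfl⟩⟩
    apply le_antisymm
    · apply le_min
      · calc flowF 𝓜 (Function.update c e₁ t) ≤ ∑ e ∈ M₀, Function.update c e₁ t e :=
              csInf_le hfin.bddBelow ⟨M₀, hM₀, rfl⟩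
          _ = A := by rw [hsum0 t M₀ h1M₀, hAval]
      · calc flowF 𝓜 (Function.update c e₁ t) ≤ ∑ e ∈ M₁, Function.update c e₁ t e :=
              csInf_le hfin.bddBelow ⟨M₁, hM₁, rfl⟩
          _ = t + B := by rw [hsum1 t M₁ h1M₁, hBval]
    · have hmem := hne'.csInf_mem hfin
      obtain ⟨M, hM, hMeq⟩ := hmem
      rw [flowF, ← hMeq]
      dsimp only
      by_cases h1 : e₁ ∈ M
      · rw [hsum1 t M h1]
        exact le_trans (min_le_right _ _) (by linarith [hBle M hM h1])
      · rw [hsum0 t M h1]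
        exact le_trans (min_le_left _ _) (hAle M hM h1)
  -- sum in MC
  set k : ℕ := (𝓜.filter (fun M => e₂ ∈ M)).card with hk
  have hkpos : 0 < k := by
    obtain ⟨M, hM, h2⟩ := h2in
    exact Finset.card_pos.2 ⟨M, Finset.mem_filter.2 ⟨hM, h2⟩⟩
  have hMCsum : ∀ t : ℝ,
      ∑ M ∈ 𝓜.filter (fun M => e₂ ∈ M),
        Function.update c e₁ t e₂ / ∑ e ∈ M, Function.update c e₁ t e
      = (k : ℝ) * (c e₂ / (t + B)) := by
    intro t
    rw [Finset.sum_congr rfl (fun M hM => ?_), Finset.sum_const, nsmul_eq_mul]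
    obtain ⟨hM𝓜, h2M⟩ := Finset.mem_filter.1 hM
    obtain ⟨h1M, hBM⟩ := hincl M hM𝓜 h2M
    rw [hsum1 t M h1M, hBM, Function.update_of_ne (Ne.symm hne)]
  have hMCeq : ∀ t : ℝ, MC 𝓜 (Function.update c e₁ t) e₂ =
      min A (t + B) / (𝓜.card : ℝ) * ((k : ℝ) * (c e₂ / (t + B))) := by
    intro t
    rw [MC, hflow, hMCsum]
  have hcard : (0 : ℝ) < (𝓜.card : ℝ) := by
    exact_mod_cast Finset.card_pos.2 h𝓜
  constructor
  · intro t t' ht htt' ht'x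
    have hxpos : 0 < xstar := lt_trans ht (lt_of_lt_of_le htt' ht'x)
    have hminB : min A B = B := by
      rcases le_or_gt B A with h | h
      · exact min_eq_right h
      · exfalso; rw [hx, min_eq_left h.le] at hxpos; linarith
    rw [hx, hminB] at ht'x
    have h1 : t + B ≤ A := by linarith
    have h2 : t' + B ≤ A := by linarith
    have htB : 0 < t + B := by linarith
    have ht'B : 0 < t' + B := by linarith
    rw [hMCeq, hMCeq, min_eq_right h1, min_eq_right h2]
    field_simp
  · intro t t' ht htx htt'
    have htB : 0 < t + B := by linarith
    have ht'B : 0 < t' + B := by linarith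
    have h1 : A ≤ t + B := by
      rcases le_or_gt B A with h | h
      · rw [hx, min_eq_right h] at htx; linarith
      · linarith
    have h2 : A ≤ t' + B := by linarith
    rw [hMCeq, hMCeq, min_eq_left h1, min_eq_left h2]
    have hkpos' : (0 : ℝ) < (k : ℝ) := by exact_mod_cast hkpos
    have key : c e₂ / (t' + B) < c e₂ / (t + B) :=
      div_lt_div_of_pos_left hc2 htB (by linarith)
    have hAc : 0 < A / (𝓜.card : ℝ) * (k : ℝ) := by positivity
    calc A / (𝓜.card : ℝ) * ((k : ℝ) * (c e₂ / (t' + B)))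
        = A / (𝓜.card : ℝ) * (k : ℝ) * (c e₂ / (t' + B)) := by ring
      _ < A / (𝓜.card : ℝ) * (k : ℝ) * (c e₂ / (t + B)) := by
          exact mul_lt_mul_of_pos_left key hAc
      _ = A / (𝓜.card : ℝ) * ((k : ℝ) * (c e₂ / (t + B))) := by ring
end

section
/- Suppose e₁ ≠ e₂, the pair (e₁,e₂) is not independent (some member of 𝓜 contains both e₁ and e₂), and the ordered pair (e₁,e₂) is not inclusive (there exists M ∈ 𝓜 with e₂ ∈ M such that either e₁ ∉ M, or e₁ ∈ M and Σ_{e∈M∖{e₁}} c(e) > min_{M'∈𝓜} Σ_{e∈M'∖{e₁}} c(e)). Then the function t ↦ MC_{e₂}(c_t) is strictly increasing on (0, x*(e₁)] (that is, MC_{e₂}(c_t) < MC_{e₂}(c_{t'}) whenever 0 < t < t' ≤ x*(e₁)) and strictly decreasing beyond the critical value (that is, MC_{e₂}(c_t) > MC_{e₂}(c_{t'}) whenever t, t' > 0 and x*(e₁) ≤ t < t'). -/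
open Finset

/-- If `(e₁, e₂)` is neither independent (some minimal cut contains both) nor inclusive
(some minimal cut containing `e₂` either misses `e₁` or, with `e₁` removed, is not a
minimum cut of `G ∖ {e₁}`), then `e₂`'s MC payoff is strictly increasing in `e₁`'s
capacity on `(0, x*(e₁)]` and strictly decreasing beyond the critical value
`x*(e₁) = A - min A B`. -/
theorem MC_neither_pair {E : Type*} [DecidableEq E]
    (𝓜 : Finset (Finset E)) (h𝓜 : 𝓜.Nonempty) (hMne : ∀ M ∈ 𝓜, M.Nonempty)
    (e₁ e₂ : E) (hne : e₁ ≠ e₂)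
    (h1in : ∃ M ∈ 𝓜, e₁ ∈ M) (h1out : ∃ M ∈ 𝓜, e₁ ∉ M)
    (c : E → ℝ) (hc : ∀ e, e ≠ e₁ → 0 < c e)
    (A B xstar : ℝ)
    (hA : A = sInf ((fun M => ∑ e ∈ M, c e) '' {M | M ∈ 𝓜 ∧ e₁ ∉ M}))
    (hB : B = sInf ((fun M => ∑ e ∈ M.erase e₁, c e) '' {M | M ∈ 𝓜 ∧ e₁ ∈ M}))
    (hx : xstar = A - min A B)
    (hnotindep : ∃ M ∈ 𝓜, e₁ ∈ M ∧ e₂ ∈ M)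
    (hnotincl : ∃ M ∈ 𝓜, e₂ ∈ M ∧ (e₁ ∉ M ∨ B < ∑ e ∈ M.erase e₁, c e)) :
    (∀ t t' : ℝ, 0 < t → t < t' → t' ≤ xstar →
      MC 𝓜 (Function.update c e₁ t) e₂ < MC 𝓜 (Function.update c e₁ t') e₂) ∧
    (∀ t t' : ℝ, 0 < t → xstar ≤ t → t < t' →
      MC 𝓜 (Function.update c e₁ t') e₂ < MC 𝓜 (Function.update c e₁ t) e₂) := by
  have hc2 : 0 < c e₂ := hc e₂ (Ne.symm hne)
  set σf : Finset E → ℝ := fun M => ∑ e ∈ M.erase e₁, c e with hσf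
  have hσnn : ∀ M : Finset E, 0 ≤ σf M := fun M =>
    Finset.sum_nonneg fun e he => (hc e (Finset.ne_of_mem_erase he)).le
  have hcM : ∀ M ∈ 𝓜, e₁ ∉ M → 0 < ∑ e ∈ M, c e := fun M hM h1 =>
    Finset.sum_pos (fun e he => hc e (fun h => h1 (h ▸ he))) (hMne M hM)
  -- finiteness / nonemptiness of the sets defining A and B
  have hS0fin : ((fun M => ∑ e ∈ M, c e) '' {M | M ∈ 𝓜 ∧ e₁ ∉ M}).Finite :=
    (𝓜.finite_toSet.subset (fun M hM => hM.1)).image _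
  have hS1fin : ((fun M => ∑ e ∈ M.erase e₁, c e) '' {M | M ∈ 𝓜 ∧ e₁ ∈ M}).Finite :=
    (𝓜.finite_toSet.subset (fun M hM => hM.1)).image _
  obtain ⟨M₀', hM₀'𝓜, hM₀'1⟩ := h1out
  obtain ⟨M₁', hM₁'𝓜, hM₁'1⟩ := h1in
  have hS0ne : ((fun M => ∑ e ∈ M, c e) '' {M | M ∈ 𝓜 ∧ e₁ ∉ M}).Nonempty :=
    ⟨_, ⟨M₀', ⟨hM₀'𝓜, hM₀'1⟩, rfl⟩⟩
  have hS1ne : ((fun M => ∑ e ∈ M.erase e₁, c e) '' {M | M ∈ 𝓜 ∧ e₁ ∈ M}).Nonempty :=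
    ⟨_, ⟨M₁', ⟨hM₁'𝓜, hM₁'1⟩, rfl⟩⟩
  have hAle : ∀ M ∈ 𝓜, e₁ ∉ M → A ≤ ∑ e ∈ M, c e := by
    intro M hM h1
    rw [hA]
    exact csInf_le hS0fin.bddBelow ⟨M, ⟨hM, h1⟩, rfl⟩
  have hBle : ∀ M ∈ 𝓜, e₁ ∈ M → B ≤ σf M := by
    intro M hM h1
    rw [hB]
    exact csInf_le hS1fin.bddBelow ⟨M, ⟨hM, h1⟩, rfl⟩
  have hAmem : ∃ M ∈ 𝓜, e₁ ∉ M ∧ ∑ e ∈ M, c e = A := by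
    have := hS0ne.csInf_mem hS0fin
    rw [← hA] at this
    obtain ⟨M, ⟨hM, h1⟩, hMA⟩ := this
    exact ⟨M, hM, h1, hMA⟩
  have hBmem : ∃ M ∈ 𝓜, e₁ ∈ M ∧ σf M = B := by
    have := hS1ne.csInf_mem hS1fin
    rw [← hB] at this
    obtain ⟨M, ⟨hM, h1⟩, hMB⟩ := this
    exact ⟨M, hM, h1, hMB⟩
  have hApos : 0 < A := by
    obtain ⟨M, hM, h1, hMA⟩ := hAmem
    exact hMA ▸ hcM M hM h1
  have hBnn : 0 ≤ B := by
    obtain ⟨M, hM, h1, hMB⟩ := hBmem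
    exact hMB ▸ hσnn M
  -- sum of the updated capacities
  have hsum : ∀ (t : ℝ) (M : Finset E),
      ∑ e ∈ M, Function.update c e₁ t e = if e₁ ∈ M then t + σf M else ∑ e ∈ M, c e := by
    intro t M
    by_cases h : e₁ ∈ M
    · rw [if_pos h, Finset.sum_update_of_mem h, ← Finset.erase_eq]
    · rw [if_neg h]
      exact Finset.sum_congr rfl fun e he =>
        Function.update_of_ne (by rintro rfl; exact h he) _ _
  -- the flow value
  have hF : ∀ t : ℝ, flowF 𝓜 (Function.update c e₁ t) = min A (t + B) := by
    intro t
    unfold flowF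
    have hfin : ((fun M => ∑ e ∈ M, Function.update c e₁ t e) '' (𝓜 : Set (Finset E))).Finite :=
      𝓜.finite_toSet.image _
    refine le_antisymm (le_min ?_ ?_) (le_csInf ⟨_, ⟨h𝓜.choose, h𝓜.choose_spec, rfl⟩⟩ ?_)
    · obtain ⟨M, hM, h1, hMA⟩ := hAmem
      calc sInf ((fun M => ∑ e ∈ M, Function.update c e₁ t e) '' (𝓜 : Set (Finset E)))
          ≤ ∑ e ∈ M, Function.update c e₁ t e := csInf_le hfin.bddBelow ⟨M, hM, rfl⟩
        _ = A := by rw [hsum, if_neg h1, hMA]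
    · obtain ⟨M, hM, h1, hMB⟩ := hBmem
      calc sInf ((fun M => ∑ e ∈ M, Function.update c e₁ t e) '' (𝓜 : Set (Finset E)))
          ≤ ∑ e ∈ M, Function.update c e₁ t e := csInf_le hfin.bddBelow ⟨M, hM, rfl⟩
        _ = t + B := by rw [hsum, if_pos h1, hMB]
    · rintro b ⟨M, hM, rfl⟩
      dsimp only
      rw [hsum]
      split_ifs with h
      · exact le_trans (min_le_right _ _) (by linarith [hBle M hM h])
      · exact le_trans (min_le_left _ _) (hAle M hM h)
  set n : ℝ := (𝓜.card : ℝ) with hn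
  have hnpos : 0 < n := by
    simpa [hn] using Finset.card_pos.2 h𝓜
  set filt : Finset (Finset E) := 𝓜.filter (fun M => e₂ ∈ M) with hfilt
  -- the MC value
  have hMC : ∀ t : ℝ, MC 𝓜 (Function.update c e₁ t) e₂ =
      min A (t + B) / n *
        ∑ M ∈ filt, c e₂ / (if e₁ ∈ M then t + σf M else ∑ e ∈ M, c e) := by
    intro t
    unfold MC
    rw [hF]
    congr 1
    refine Finset.sum_congr rfl fun M hM => ?_
    rw [Function.update_of_ne (Ne.symm hne), hsum]
  constructor
  · -- increasing part
    intro t t' ht htt' ht'x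
    have hBA : B < A := by
      by_contra h
      push_neg at h
      rw [hx, min_eq_left h] at ht'x
      linarith
    have hminB : min A B = B := min_eq_right hBA.le
    rw [hx, hminB] at ht'x
    have hFt : min A (t + B) = t + B := min_eq_right (by linarith)
    have hFt' : min A (t' + B) = t' + B := min_eq_right (by linarith)
    rw [hMC t, hMC t', hFt, hFt', div_mul_eq_mul_div, div_mul_eq_mul_div,
      Finset.mul_sum, Finset.mul_sum]
    rw [div_lt_div_iff_of_pos_right hnpos]
    obtain ⟨Mw, hMw𝓜, hMw2, hMwd⟩ := hnotincl
    have hMwf : Mw ∈ filt := Finset.mem_filter.2 ⟨hMw𝓜, hMw2⟩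
    refine Finset.sum_lt_sum ?_ ⟨Mw, hMwf, ?_⟩
    · intro M hMf
      obtain ⟨hM, _⟩ := Finset.mem_filter.1 hMf
      split_ifs with h
      · have hσB : B ≤ σf M := hBle M hM h
        have hd1 : 0 < t + σf M := by linarith [hσnn M]
        have hd2 : 0 < t' + σf M := by linarith [hσnn M]
        rw [mul_div_assoc', mul_div_assoc', div_le_div_iff₀ hd1 hd2]
        nlinarith [mul_nonneg (mul_nonneg hc2.le (sub_nonneg.2 htt'.le)) (sub_nonneg.2 hσB)]
      · have hcMp := hcM M hM h
        have := div_pos hc2 hcMp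
        nlinarith
    · by_cases h : e₁ ∈ Mw
      · have hBσ : B < σf Mw := by
          rcases hMwd with h' | h'
          · exact absurd h h'
          · exact h'
        rw [if_pos h, if_pos h]
        have hd1 : 0 < t + σf Mw := by linarith [hσnn Mw]
        have hd2 : 0 < t' + σf Mw := by linarith [hσnn Mw]
        rw [mul_div_assoc', mul_div_assoc', div_lt_div_iff₀ hd1 hd2]
        nlinarith [mul_pos (mul_pos hc2 (sub_pos.2 htt')) (sub_pos.2 hBσ)]
      · rw [if_neg h, if_neg h]
        have hcMp := hcM Mw hMw𝓜 h
        have := div_pos hc2 hcMp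
        nlinarith
  · -- decreasing part
    intro t t' ht hxt htt'
    rw [hx] at hxt
    have ht' : 0 < t' := ht.trans htt'
    have hFt : min A (t + B) = A := min_eq_left (by linarith [min_le_right A B])
    have hFt' : min A (t' + B) = A := min_eq_left (by linarith [min_le_right A B])
    rw [hMC t, hMC t', hFt, hFt']
    refine mul_lt_mul_of_pos_left ?_ (div_pos hApos hnpos)
    obtain ⟨Mw, hMw𝓜, hMw1, hMw2⟩ := hnotindep
    have hMwf : Mw ∈ filt := Finset.mem_filter.2 ⟨hMw𝓜, hMw2⟩
    refine Finset.sum_lt_sum ?_ ⟨Mw, hMwf, ?_⟩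
    · intro M hMf
      obtain ⟨hM, _⟩ := Finset.mem_filter.1 hMf
      split_ifs with h
      · have hd1 : 0 < t + σf M := by linarith [hσnn M]
        exact div_le_div_of_nonneg_left hc2.le hd1 (by linarith)
      · exact le_refl _
    · rw [if_pos hMw1, if_pos hMw1]
      have hd1 : 0 < t + σf Mw := by linarith [hσnn Mw]
      exact div_lt_div_of_pos_left hc2 hd1 (by linarith)
end

section
/- Let (E,𝓜) be a cut system and let i ≠ j be two edges in E, with δ_i, δ_j ∈ [0,∞)^E denoting the indicator vectors of i and j. (a) If for every c ∈ [0,∞)^E and all a, b > 0 one has F(c + a·δ_i + b·δ_j) − F(c + a·δ_i) − F(c + b·δ_j) + F(c) ≥ 0 (the pair (e_i,e_j) is constantly complementary), then for any fixed capacities of the other edges the map sending c(i) to Sh_j(v_c) is nondecreasing. (b) If instead F(c + a·δ_i + b·δ_j) − F(c + a·δ_i) − F(c + b·δ_j) + F(c) ≤ 0 for every c ∈ [0,∞)^E and all a, b > 0 (the pair is constantly substitutable), then the map sending c(i) to Sh_j(v_c) is nonincreasing. -/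
open Finset

lemma flowGame_eq_flowF {E : Type*} [DecidableEq E] (𝓜 : Finset (Finset E)) (c : E → ℝ)
    (S : Finset E) :
    flowGame 𝓜 c S = flowF 𝓜 (fun e => if e ∈ S then c e else 0) := by
  unfold flowGame flowF
  congr 1
  apply Set.image_congr
  intro M _
  exact (Finset.sum_ite_mem M S c).symm

lemma flowGame_congr {E : Type*} [DecidableEq E] (𝓜 : Finset (Finset E)) {c₁ c₂ : E → ℝ}
    {S : Finset E} (h : ∀ e ∈ S, c₁ e = c₂ e) : flowGame 𝓜 c₁ S = flowGame 𝓜 c₂ S := by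
  rw [flowGame_eq_flowF, flowGame_eq_flowF]
  congr 1
  funext e
  by_cases he : e ∈ S
  · simp [he, h e he]
  · simp [he]

lemma flow_diff_eq {E : Type*} [DecidableEq E] (𝓜 : Finset (Finset E)) {i j : E} (hij : i ≠ j)
    (c : E → ℝ) (t a : ℝ) {S : Finset E} (hjS : j ∈ S) (hiS : i ∈ S) :
    (flowGame 𝓜 (Function.update c i (t + a)) S
      - flowGame 𝓜 (Function.update c i (t + a)) (S.erase j))
    - (flowGame 𝓜 (Function.update c i t) S
      - flowGame 𝓜 (Function.update c i t) (S.erase j))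
    = flowF 𝓜 (fun e => (if e ∈ S.erase j then Function.update c i t e else 0)
          + (if e = i then a else 0) + (if e = j then c j else 0))
      - flowF 𝓜 (fun e => (if e ∈ S.erase j then Function.update c i t e else 0)
          + (if e = i then a else 0))
      - flowF 𝓜 (fun e => (if e ∈ S.erase j then Function.update c i t e else 0)
          + (if e = j then c j else 0))
      + flowF 𝓜 (fun e => if e ∈ S.erase j then Function.update c i t e else 0) := by
  have hiS' : i ∈ S.erase j := Finset.mem_erase.2 ⟨hij, hiS⟩
  have h11 : flowGame 𝓜 (Function.update c i (t + a)) S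
      = flowF 𝓜 (fun e => (if e ∈ S.erase j then Function.update c i t e else 0)
          + (if e = i then a else 0) + (if e = j then c j else 0)) := by
    rw [flowGame_eq_flowF]
    congr 1
    funext e
    by_cases hej : e = j
    · subst hej
      simp [Function.update_apply, hij.symm, hjS]
    · by_cases hei : e = i
      · subst hei
        simp [Function.update_apply, hiS, hiS', hej]
      · by_cases heS : e ∈ S
        · simp [Function.update_apply, hei, hej, heS, Finset.mem_erase]
        · have : e ∉ S.erase j := fun h => heS (Finset.mem_of_mem_erase h)
          simp [hei, hej, heS, this]
  have h10 : flowGame 𝓜 (Function.update c i (t + a)) (S.erase j)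
      = flowF 𝓜 (fun e => (if e ∈ S.erase j then Function.update c i t e else 0)
          + (if e = i then a else 0)) := by
    rw [flowGame_eq_flowF]
    congr 1
    funext e
    by_cases hei : e = i
    · subst hei
      simp [Function.update_apply, hiS']
    · by_cases heS : e ∈ S.erase j <;> simp [Function.update_apply, hei, heS]
  have h01 : flowGame 𝓜 (Function.update c i t) S
      = flowF 𝓜 (fun e => (if e ∈ S.erase j then Function.update c i t e else 0)
          + (if e = j then c j else 0)) := by
    rw [flowGame_eq_flowF]
    congr 1
    funext e
    by_cases hej : e = j
    · subst hej
      simp [Function.update_apply, hij.symm, hjS]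
    · by_cases heS : e ∈ S
      · simp [Function.update_apply, hej, heS, Finset.mem_erase]
      · have : e ∉ S.erase j := fun h => heS (Finset.mem_of_mem_erase h)
        simp [hej, heS, this]
  have h00 : flowGame 𝓜 (Function.update c i t) (S.erase j)
      = flowF 𝓜 (fun e => if e ∈ S.erase j then Function.update c i t e else 0) :=
    flowGame_eq_flowF ..
  rw [h11, h10, h01, h00]
  ring

lemma key_le {E : Type*} [DecidableEq E] (𝓜 : Finset (Finset E)) {i j : E} (hij : i ≠ j)
    (H : ∀ c : E → ℝ, (∀ e, 0 ≤ c e) → ∀ a b : ℝ, 0 < a → 0 < b →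
        0 ≤ flowF 𝓜 (fun e => c e + (if e = i then a else 0) + (if e = j then b else 0))
            - flowF 𝓜 (fun e => c e + (if e = i then a else 0))
            - flowF 𝓜 (fun e => c e + (if e = j then b else 0))
            + flowF 𝓜 c)
    (c : E → ℝ) (hc : ∀ e, 0 ≤ c e) (t t' : ℝ) (ht : 0 ≤ t) (htt : t < t')
    {S : Finset E} (hjS : j ∈ S) (hiS : i ∈ S) :
    flowGame 𝓜 (Function.update c i t) S - flowGame 𝓜 (Function.update c i t) (S.erase j)
      ≤ flowGame 𝓜 (Function.update c i t') S
        - flowGame 𝓜 (Function.update c i t') (S.erase j) := by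
  have hd := flow_diff_eq 𝓜 hij c t (t' - t) hjS hiS
  rw [show t + (t' - t) = t' by ring] at hd
  set base := fun e => if e ∈ S.erase j then Function.update c i t e else 0 with hbase
  have hbc : ∀ e, 0 ≤ base e := by
    intro e
    simp only [hbase]
    split
    · rw [Function.update_apply]
      split
      · exact ht
      · exact hc e
    · exact le_refl 0
  by_cases hcj : c j = 0
  · have h1 : ∀ f : E → ℝ, (fun e => f e + (if e = j then c j else 0)) = f := by
      intro f; funext e; simp [hcj]
    rw [h1, h1 base] at hd
    linarith
  · have hb : 0 < c j := lt_of_le_of_ne (hc j) (Ne.symm hcj)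
    have := H base hbc (t' - t) (c j) (by linarith) hb
    linarith

lemma key_ge {E : Type*} [DecidableEq E] (𝓜 : Finset (Finset E)) {i j : E} (hij : i ≠ j)
    (H : ∀ c : E → ℝ, (∀ e, 0 ≤ c e) → ∀ a b : ℝ, 0 < a → 0 < b →
        flowF 𝓜 (fun e => c e + (if e = i then a else 0) + (if e = j then b else 0))
            - flowF 𝓜 (fun e => c e + (if e = i then a else 0))
            - flowF 𝓜 (fun e => c e + (if e = j then b else 0))
            + flowF 𝓜 c ≤ 0)
    (c : E → ℝ) (hc : ∀ e, 0 ≤ c e) (t t' : ℝ) (ht : 0 ≤ t) (htt : t < t')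
    {S : Finset E} (hjS : j ∈ S) (hiS : i ∈ S) :
    flowGame 𝓜 (Function.update c i t') S - flowGame 𝓜 (Function.update c i t') (S.erase j)
      ≤ flowGame 𝓜 (Function.update c i t) S
        - flowGame 𝓜 (Function.update c i t) (S.erase j) := by
  have hd := flow_diff_eq 𝓜 hij c t (t' - t) hjS hiS
  rw [show t + (t' - t) = t' by ring] at hd
  set base := fun e => if e ∈ S.erase j then Function.update c i t e else 0 with hbase
  have hbc : ∀ e, 0 ≤ base e := by
    intro e
    simp only [hbase]
    split
    · rw [Function.update_apply]
      split
      · exact ht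
      · exact hc e
    · exact le_refl 0
  by_cases hcj : c j = 0
  · have h1 : ∀ f : E → ℝ, (fun e => f e + (if e = j then c j else 0)) = f := by
      intro f; funext e; simp [hcj]
    rw [h1, h1 base] at hd
    linarith
  · have hb : 0 < c j := lt_of_le_of_ne (hc j) (Ne.symm hcj)
    have := H base hbc (t' - t) (c j) (by linarith) hb
    linarith

lemma flowGame_update_not_mem {E : Type*} [DecidableEq E] (𝓜 : Finset (Finset E))
    {i : E} (c : E → ℝ) (t t' : ℝ) {S : Finset E} (hiS : i ∉ S) :
    flowGame 𝓜 (Function.update c i t) S = flowGame 𝓜 (Function.update c i t') S := by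
  apply flowGame_congr
  intro e he
  have : e ≠ i := fun h => hiS (h ▸ he)
  rw [Function.update_apply, Function.update_apply, if_neg this, if_neg this]

/-- (a) If edges `i ≠ j` are constantly complementary (the discrete second-order
difference of the max-flow function in their capacities is always nonnegative), then
`j`'s Shapley payoff is nondecreasing in `i`'s capacity. (b) If they are constantly
substitutable (the difference is always nonpositive), then `j`'s Shapley payoff is
nonincreasing in `i`'s capacity. -/
theorem shapley_complementary_substitutable {E : Type*} [Fintype E] [DecidableEq E]
    (𝓜 : Finset (Finset E)) (h𝓜 : 𝓜.Nonempty) (hMne : ∀ M ∈ 𝓜, M.Nonempty)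
    (i j : E) (hij : i ≠ j) :
    ((∀ c : E → ℝ, (∀ e, 0 ≤ c e) → ∀ a b : ℝ, 0 < a → 0 < b →
        0 ≤ flowF 𝓜 (fun e => c e + (if e = i then a else 0) + (if e = j then b else 0))
            - flowF 𝓜 (fun e => c e + (if e = i then a else 0))
            - flowF 𝓜 (fun e => c e + (if e = j then b else 0))
            + flowF 𝓜 c) →
      ∀ c : E → ℝ, (∀ e, 0 ≤ c e) → ∀ t t' : ℝ, 0 ≤ t → t ≤ t' →
        shapley (flowGame 𝓜 (Function.update c i t)) j ≤
          shapley (flowGame 𝓜 (Function.update c i t')) j) ∧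
    ((∀ c : E → ℝ, (∀ e, 0 ≤ c e) → ∀ a b : ℝ, 0 < a → 0 < b →
        flowF 𝓜 (fun e => c e + (if e = i then a else 0) + (if e = j then b else 0))
            - flowF 𝓜 (fun e => c e + (if e = i then a else 0))
            - flowF 𝓜 (fun e => c e + (if e = j then b else 0))
            + flowF 𝓜 c ≤ 0) →
      ∀ c : E → ℝ, (∀ e, 0 ≤ c e) → ∀ t t' : ℝ, 0 ≤ t → t ≤ t' →
        shapley (flowGame 𝓜 (Function.update c i t')) j ≤
          shapley (flowGame 𝓜 (Function.update c i t)) j) := by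
  constructor
  · intro H c hc t t' ht htt'
    rcases eq_or_lt_of_le htt' with rfl | hlt
    · exact le_refl _
    unfold shapley
    apply Finset.sum_le_sum
    intro S hS
    have hjS : j ∈ S := (Finset.mem_filter.1 hS).2
    apply mul_le_mul_of_nonneg_left _ (by positivity)
    by_cases hiS : i ∈ S
    · exact key_le 𝓜 hij H c hc t t' ht hlt hjS hiS
    · rw [flowGame_update_not_mem 𝓜 c t t' hiS,
        flowGame_update_not_mem 𝓜 c t t' (fun h => hiS (Finset.mem_of_mem_erase h))]
  · intro H c hc t t' ht htt'
    rcases eq_or_lt_of_le htt' with rfl | hlt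
    · exact le_refl _
    unfold shapley
    apply Finset.sum_le_sum
    intro S hS
    have hjS : j ∈ S := (Finset.mem_filter.1 hS).2
    apply mul_le_mul_of_nonneg_left _ (by positivity)
    by_cases hiS : i ∈ S
    · exact key_ge 𝓜 hij H c hc t t' ht hlt hjS hiS
    · rw [flowGame_update_not_mem 𝓜 c t' t hiS,
        flowGame_update_not_mem 𝓜 c t' t (fun h => hiS (Finset.mem_of_mem_erase h))]
end

section
/- Let (E,𝓜) be a cut system and c ∈ [0,∞)^E. Let M* ∈ 𝓜 attain the minimum min_{M∈𝓜} c(M), and define x ∈ ℝ^E by x_e = c(e) for e ∈ M* and x_e = 0 for e ∉ M*. Then x ∈ C(E, v_c): allocating to each edge of a minimum cut its capacity and zero to every other edge yields a core allocation of the max-flow game. -/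
open Finset

/-- Allocating to each edge of a minimum cut its capacity, and zero to every other
edge, yields a core allocation of the max-flow game. -/
theorem minimum_cut_in_core {E : Type*} [Fintype E] [DecidableEq E]
    (𝓜 : Finset (Finset E)) (h𝓜 : 𝓜.Nonempty) (hMne : ∀ M ∈ 𝓜, M.Nonempty)
    (c : E → ℝ) (hc : ∀ e, 0 ≤ c e)
    (Mstar : Finset E) (hMstar : Mstar ∈ 𝓜)
    (hmin : ∑ e ∈ Mstar, c e = flowF 𝓜 c) :
    (∀ S : Finset E, flowGame 𝓜 c S ≤ ∑ e ∈ S, (if e ∈ Mstar then c e else 0)) ∧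
    (∑ e, (if e ∈ Mstar then c e else 0)) = flowGame 𝓜 c Finset.univ := by
  have hsum : ∀ S : Finset E, ∑ e ∈ S, (if e ∈ Mstar then c e else 0)
      = ∑ e ∈ Mstar ∩ S, c e := by
    intro S
    rw [Finset.sum_ite_mem, Finset.inter_comm]
  constructor
  · intro S
    rw [hsum]
    apply csInf_le
    · exact (Set.Finite.image _ (𝓜.finite_toSet)).bddBelow
    · exact ⟨Mstar, hMstar, rfl⟩
  · rw [hsum, Finset.inter_univ]
    unfold flowGame
    have himg : ((fun M => ∑ e ∈ M ∩ Finset.univ, c e) '' (𝓜 : Set (Finset E)))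
        = ((fun M => ∑ e ∈ M, c e) '' (𝓜 : Set (Finset E))) := by
      apply Set.image_congr
      intro M _
      rw [Finset.inter_univ]
    rw [himg, ← flowF]
    exact hmin
end
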